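/- Let α be a real number with α − max G ∉ {0, −1, −2, …}, and let κ_i^g (i = 0,…,m−1, g ∈ G) be arbitrary real numbers (no admissibility assumption). Then for all integers k, u, i with 0 ≤ k ≤ u and 0 ≤ i ≤ m−1, one has ⟨x^k·L_u^α(x), x^i⟩ = Γ(α)·Σ_{g∈G} κ_i^g·Σ_{l=k}^{g} (α−l)_k·w_l^g·binom(u+l−k, l−k), where ⟨·,·⟩ is the bilinear form defined below and binom(u+l−k, l−k) is the ordinary integer binomial coefficient. -/

import Mathlib

/-! For `q = x^i` only the `i`-th summand of `⟨p, q⟩` survives, and its `m` terms `-x^{i-m}/m`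
cancel `L_{α-m}(p x^i) = L_α(p x^{i-m})`. What is left are the moments
`L_α(x^{k-l-1} L_u^α)`. Expanding `L_u^α` and using `Γ(a + j) = Γ(a) (a)_j`, such a moment is
`Γ(α+k-l)/u!` times a Chu–Vandermonde sum equal to `(l-k+1)_u`, which vanishes for `l < k ≤ u`
and is `u! binom(u+l-k, l-k)` for `l ≥ k`; finally `Γ(α+k-l) (α-l)_l = Γ(α) (α-l)_k`.
The condition on `α` keeps every Gamma argument away from the poles. -/

open Polynomial Finset

/-- Pochhammer symbol `(a)_l = a (a+1) ⋯ (a+l-1)`, with `(a)_0 = 1`. -/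
noncomputable def poch (a : ℝ) (l : ℕ) : ℝ := ∏ t ∈ Finset.range l, (a + t)

/-- Generalized binomial coefficient `binom (n+α, n−j) = (α+j+1)⋯(α+n)/(n−j)!`. -/
noncomputable def genBinom (α : ℝ) (n j : ℕ) : ℝ :=
  (∏ t ∈ Finset.Ico (j + 1) (n + 1), (α + t)) / (Nat.factorial (n - j) : ℝ)

/-- Laguerre polynomial `L_n^α(x) = Σ_{j=0}^n ((−x)^j/j!)·binom(n+α, n−j)`. -/
noncomputable def laguerre (α : ℝ) (n : ℕ) : Polynomial ℝ :=
  ∑ j ∈ Finset.range (n + 1),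
    Polynomial.C ((-1 : ℝ) ^ j / (Nat.factorial j : ℝ) * genBinom α n j) * Polynomial.X ^ j

/-- Laguerre polynomials indexed by `ℤ`, with the convention `L_u^α = 0` for `u < 0`. -/
noncomputable def laguerreZ (α : ℝ) (n : ℤ) : Polynomial ℝ :=
  if n < 0 then 0 else laguerre α n.toNat

/-- The polynomial `binom (x+l, l) = (x+1)(x+2)⋯(x+l)/l!`. -/
noncomputable def binomPoly (l : ℕ) : Polynomial ℝ :=
  Polynomial.C ((Nat.factorial l : ℝ)⁻¹) *
    ∏ t ∈ Finset.range l, (Polynomial.X + Polynomial.C ((t : ℝ) + 1))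

/-- The Casoratian `Ω_G(x) = det (R_{g_l}(x−j))_{l,j=1,…,m}`. -/
noncomputable def casoratian {m : ℕ} (R : Fin m → Polynomial ℝ) (x : ℝ) : ℝ :=
  Matrix.det (Matrix.of fun l j : Fin m => (R l).eval (x - ((j : ℕ) + 1)))

/-- The maximum of the finite set `G` (given by the values of `g`). -/
noncomputable def Gmax {m : ℕ} (g : Fin m → ℕ) : ℕ := Finset.univ.sup g

/-- The polynomial `q_n`, defined as an `(m+1)×(m+1)` determinant whose first row is
`(L_n^α(x), …, L_{n−m}^α(x))` and whose `(h+1)`-th row is `(R_{g_h}(n), …, R_{g_h}(n−m))`. -/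
noncomputable def qpoly (α : ℝ) {m : ℕ} (R : Fin m → Polynomial ℝ) (n : ℤ) : Polynomial ℝ :=
  Matrix.det (Matrix.of fun i j : Fin (m + 1) =>
    if h : (i : ℕ) = 0 then laguerreZ α (n - (j : ℕ))
    else Polynomial.C ((R ⟨(i : ℕ) - 1, by have := i.isLt; omega⟩).eval ((n : ℝ) - ((j : ℕ) : ℝ))))

/-- `q_n` extended by the convention `q_k = 0` for `k < 0`. -/
noncomputable def qZ (α : ℝ) {m : ℕ} (R : Fin m → Polynomial ℝ) (n : ℤ) : Polynomial ℝ :=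
  if n < 0 then 0 else qpoly α R n

/-- `momFun β p k = L_β(p(x)·x^k)`, where `L_β` is the moment functional on Laurent
polynomials determined by `L_β(x^j) = Γ(β+j+1)`. -/
noncomputable def momFun (β : ℝ) (p : Polynomial ℝ) (k : ℤ) : ℝ :=
  ∑ t ∈ Finset.range (p.natDegree + 1), p.coeff t * Real.Gamma (β + t + k + 1)

/-- The bilinear form `⟨p, q⟩ = L_{α−m}(p·q) + Σ_{i=0}^{m−1} (q^{(i)}(0)/i!)·L_α(p·U_i)`,
where `U_i(x) = Σ_{g∈G} ( −x^{i−m}/m + κ_i^g·Σ_{l=0}^g (α−l)_l w_l^g x^{−l−1} )`. -/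
noncomputable def bilin (α : ℝ) {m : ℕ} (g : Fin m → ℕ) (κ : ℕ → Fin m → ℝ)
    (w : Fin m → ℕ → ℝ) (p q : Polynomial ℝ) : ℝ :=
  momFun (α - m) (p * q) 0 +
    ∑ i ∈ Finset.range m,
      (Polynomial.eval 0 (Polynomial.derivative^[i] q) / (Nat.factorial i : ℝ)) *
        (∑ h : Fin m,
          (-(1 / (m : ℝ)) * momFun α p ((i : ℤ) - (m : ℤ)) +
            κ i h * ∑ l ∈ Finset.range (g h + 1),
              poch (α - l) l * w h l * momFun α p (-((l : ℤ) + 1))))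

/-- The bilinear form `⟨p, q⟩_ξ` (case `α` a positive integer with `α ≤ max G`). -/
noncomputable def bilinXi (α : ℕ) {m : ℕ} (g : Fin m → ℕ) (κ : ℕ → Fin m → ℝ)
    (w : Fin m → ℕ → ℝ) (p q : Polynomial ℝ) : ℝ :=
  momFun ((α - m : ℕ) : ℝ) (p * Polynomial.derivative^[m - α] q) 0 +
    ∑ i ∈ Finset.range m,
      (Polynomial.eval 0 (Polynomial.derivative^[i] q) / (Nat.factorial i : ℝ)) *
        (∑ h : Fin m,
          (poch ((i : ℝ) - m + α + 1) (m - α) * (-(1 / (m : ℝ))) * momFun α p ((i : ℤ) - (m : ℤ)) +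
            κ i h * ∑ l ∈ Finset.range (if g h < α then g h + 1 else α),
              poch ((α : ℝ) - l) l * w h l * momFun α p (-((l : ℤ) + 1)))) +
    Real.Gamma α *
      ∑ i ∈ Finset.range m,
        (Polynomial.eval 0 (Polynomial.derivative^[i] q) / (Nat.factorial i : ℝ)) *
          ∑ h ∈ Finset.univ.filter (fun h : Fin m => α ≤ g h),
            κ i h *
              ∑ j ∈ Finset.range (g h - α + 1),
                (Polynomial.eval 0 (Polynomial.derivative^[j] p) / (Nat.factorial j : ℝ)) *
                  ∑ l ∈ Finset.Icc (α + j) (g h), poch ((α : ℝ) - l) j * w h l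

lemma descPochhammer_smeval_eq_prod_range (r : ℝ) (n : ℕ) :
    (descPochhammer ℤ n).smeval r = ∏ t ∈ range n, (r - t) := by
  rw [← aeval_eq_smeval, aeval_def, ← eval_map, descPochhammer_map,
    descPochhammer_eval_eq_prod_range]

lemma prod_range_add_sub_eq_sum (x y : ℝ) (n : ℕ) :
    ∏ t ∈ range n, (x + y - t) =
      ∑ j ∈ range (n + 1), (n.choose j : ℝ) *
        ((∏ t ∈ range j, (x - t)) * ∏ t ∈ range (n - j), (y - t)) := by
  simp only [← descPochhammer_smeval_eq_prod_range]
  rw [Ring.descPochhammer_smeval_add n (Commute.all x y),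
    Nat.sum_antidiagonal_eq_sum_range_succ (fun i j => (n.choose i : ℝ) *
      ((descPochhammer ℤ i).smeval x * (descPochhammer ℤ j).smeval y))]

lemma neg_one_pow_mul_poch (a : ℝ) (j : ℕ) : (-1) ^ j * poch a j = ∏ t ∈ range j, (-a - t) := by
  rw [poch, ← card_range j, ← prod_const, card_range, ← prod_mul_distrib]
  exact prod_congr rfl fun _ _ => by ring

lemma prod_Ico_add_eq_prod_range_sub (b : ℝ) {j u : ℕ} (hj : j ≤ u) :
    ∏ t ∈ Ico (j + 1) (u + 1), (b + t) = ∏ t ∈ range (u - j), (b + u - t) := by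
  rw [prod_Ico_eq_prod_range, ← prod_range_reflect]
  refine prod_congr (by congr 1; omega) fun t ht => ?_
  have ht := mem_range.mp ht
  rw [show j + 1 + (u + 1 - (j + 1) - 1 - t) = u - t by omega, Nat.cast_sub (by omega)]
  ring

lemma poch_add_one_eq_prod_range_sub (c : ℝ) (u : ℕ) :
    poch (c + 1) u = ∏ t ∈ range u, (c + u - t) := by
  rw [poch, ← prod_range_reflect]
  refine prod_congr rfl fun t ht => ?_
  have ht := mem_range.mp ht
  rw [Nat.cast_sub (by omega), Nat.cast_sub (by omega)]
  push_cast
  ring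

-- Chu–Vandermonde for falling factorials, at `x = -a` and `y = b + u`.
lemma sum_choose_poch_mul_prod_Ico (a b : ℝ) (u : ℕ) :
    ∑ j ∈ range (u + 1), (-1) ^ j * (u.choose j : ℝ) * poch a j *
        ∏ t ∈ Ico (j + 1) (u + 1), (b + t) = poch (b - a + 1) u := by
  rw [poch_add_one_eq_prod_range_sub, show b - a + u = -a + (b + u) by ring,
    prod_range_add_sub_eq_sum]
  refine sum_congr rfl fun j hj => ?_
  rw [prod_Ico_add_eq_prod_range_sub b (by have := mem_range.mp hj; omega),
    ← neg_one_pow_mul_poch]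
  simp only [add_sub_assoc]
  ring

lemma Gamma_add_nat_eq_mul_poch (a : ℝ) (j : ℕ) (h : ∀ t < j, a + t ≠ 0) :
    Real.Gamma (a + j) = Real.Gamma a * poch a j := by
  induction j with
  | zero => simp [poch]
  | succ j ih =>
    rw [Nat.cast_succ, ← add_assoc, Real.Gamma_add_one (h j j.lt_succ_self),
      ih fun t ht => h t (Nat.lt_succ_of_lt ht)]
    simp only [poch, prod_range_succ]
    ring

lemma poch_natCast_add_one (d u : ℕ) : poch (d + 1) u = u.factorial * (d + u).choose u := by
  have h := congrArg (Nat.cast : ℕ → ℝ) (Nat.ascFactorial_eq_factorial_mul_choose d u)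
  rw [Nat.ascFactorial_eq_prod_range] at h
  push_cast at h
  rw [← h, poch]

lemma poch_neg_natCast_of_lt {n u : ℕ} (h : n < u) : poch (-n) u = 0 :=
  prod_eq_zero (mem_range.mpr h) (neg_add_cancel _)

lemma laguerre_natDegree_le (α : ℝ) (u : ℕ) : (laguerre α u).natDegree ≤ u :=
  natDegree_sum_le_of_forall_le _ _ fun j hj =>
    (natDegree_C_mul_X_pow_le _ j).trans (Nat.lt_succ_iff.mp (mem_range.mp hj))

lemma laguerre_coeff {α : ℝ} {u j : ℕ} (hj : j ≤ u) :
    (laguerre α u).coeff j = (-1) ^ j / j.factorial * genBinom α u j := by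
  simp only [laguerre, finsetSum_coeff, coeff_C_mul_X_pow]
  simp [Nat.lt_succ_of_le hj]

lemma momFun_eq_sum_range {β : ℝ} {p : ℝ[X]} {N : ℕ} (hp : p.natDegree ≤ N) (k : ℤ) :
    momFun β p k = ∑ t ∈ range (N + 1), p.coeff t * Real.Gamma (β + t + k + 1) := by
  unfold momFun
  rw [← sum_over_range' p (f := fun t a => a * Real.Gamma (β + t + k + 1)) (by simp) _
    p.natDegree.lt_succ_self, sum_over_range' _ (by simp) _ (Nat.lt_succ_of_le hp)]

lemma momFun_mul_X_pow (β : ℝ) (p : ℝ[X]) (i : ℕ) (k : ℤ) :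
    momFun β (p * X ^ i) k = momFun β p (i + k) := by
  rw [momFun_eq_sum_range (N := i + p.natDegree) (natDegree_mul_le.trans (by simp [add_comm])),
    add_assoc, sum_range_add, sum_eq_zero fun t ht => ?_, zero_add, momFun]
  · refine sum_congr rfl fun t _ => ?_
    rw [add_comm i t, coeff_mul_X_pow]
    push_cast
    ring_nf
  · simp [coeff_mul_X_pow', not_le.mpr (mem_range.mp ht)]

lemma momFun_sub_natCast (β : ℝ) (p : ℝ[X]) (n : ℕ) (k : ℤ) :
    momFun (β - n) p k = momFun β p (k - n) := by
  refine sum_congr rfl fun t _ => ?_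
  push_cast
  ring_nf

lemma momFun_laguerre (α : ℝ) (u : ℕ) (r : ℤ) (h : ∀ t < u, α + r + 1 + t ≠ 0) :
    momFun α (laguerre α u) r = Real.Gamma (α + r + 1) * poch (-r) u / u.factorial := by
  rw [momFun_eq_sum_range (laguerre_natDegree_le α u),
    show (-r : ℝ) = α - (α + r + 1) + 1 by ring, ← sum_choose_poch_mul_prod_Ico, mul_sum,
    sum_div]
  refine sum_congr rfl fun j hj => ?_
  have hju : j ≤ u := Nat.lt_succ_iff.mp (mem_range.mp hj)
  rw [laguerre_coeff hju, genBinom, show α + j + r + 1 = α + r + 1 + j by ring,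
    Gamma_add_nat_eq_mul_poch _ _ fun t ht => h t (by omega), Nat.cast_choose ℝ hju]
  field_simp

lemma momFun_X_pow_mul_laguerre {α : ℝ} {l : ℕ} (hα : ∀ n : ℕ, α - l + n ≠ 0) (k u : ℕ) :
    momFun α (X ^ k * laguerre α u) (-(l + 1)) =
      Real.Gamma (α - l + k) * poch (l - k + 1) u / u.factorial := by
  rw [mul_comm, momFun_mul_X_pow, momFun_laguerre]
  · push_cast
    ring_nf
  · intro t _
    convert hα (k + t) using 1
    push_cast
    ring

lemma momFun_X_pow_mul_laguerre_of_lt {α : ℝ} {k l u : ℕ} (hα : ∀ n : ℕ, α - l + n ≠ 0)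
    (hlk : l < k) (hku : k ≤ u) : momFun α (X ^ k * laguerre α u) (-(l + 1)) = 0 := by
  have hbase : (l : ℝ) - k + 1 = -((k - 1 - l : ℕ) : ℝ) := by
    rw [Nat.cast_sub (by omega), Nat.cast_sub (by omega)]
    ring
  rw [momFun_X_pow_mul_laguerre hα, hbase, poch_neg_natCast_of_lt (by omega), mul_zero, zero_div]

lemma poch_mul_momFun_X_pow_mul_laguerre {α : ℝ} {k l : ℕ} (hα : ∀ n : ℕ, α - l + n ≠ 0)
    (hkl : k ≤ l) (u : ℕ) :
    poch (α - l) l * momFun α (X ^ k * laguerre α u) (-(l + 1)) =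
      Real.Gamma α * poch (α - l) k * (u + l - k).choose (l - k) := by
  have hΓ : ∀ j : ℕ, Real.Gamma (α - l + j) = Real.Gamma (α - l) * poch (α - l) j :=
    fun j => Gamma_add_nat_eq_mul_poch _ j fun t _ => hα t
  have hα' : Real.Gamma α = Real.Gamma (α - l) * poch (α - l) l := by
    rw [← hΓ, sub_add_cancel]
  rw [momFun_X_pow_mul_laguerre hα, hΓ, hα',
    show (l : ℝ) - k + 1 = ((l - k : ℕ) : ℝ) + 1 by rw [Nat.cast_sub hkl],
    poch_natCast_add_one, show u + l - k = l - k + u by omega, Nat.choose_symm_add]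
  field_simp

lemma eval_zero_iterate_derivative_div_factorial (q : ℝ[X]) (j : ℕ) :
    eval 0 (derivative^[j] q) / j.factorial = q.coeff j := by
  rw [← coeff_zero_eq_eval_zero, coeff_iterate_derivative, zero_add, Nat.descFactorial_self,
    nsmul_eq_mul]
  field_simp

lemma bilin_X_pow (α : ℝ) {m : ℕ} (g : Fin m → ℕ) (κ : ℕ → Fin m → ℝ) (w : Fin m → ℕ → ℝ)
    (p : ℝ[X]) {i : ℕ} (hi : i < m) :
    bilin α g κ w p (X ^ i) = ∑ h : Fin m, κ i h *
      ∑ l ∈ range (g h + 1), poch (α - l) l * w h l * momFun α p (-(l + 1)) := by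
  have hm : (m : ℝ) ≠ 0 := Nat.cast_ne_zero.mpr (Nat.ne_zero_of_lt hi)
  simp only [bilin, eval_zero_iterate_derivative_div_factorial, coeff_X_pow, ite_mul, one_mul,
    zero_mul, sum_ite_eq', mem_range, hi, if_true, sum_add_distrib, sum_const, card_univ,
    Fintype.card_fin, nsmul_eq_mul]
  rw [momFun_sub_natCast, momFun_mul_X_pow, zero_sub, ← sub_eq_add_neg]
  field_simp
  ring

lemma sum_poch_mul_momFun_X_pow_mul_laguerre {α : ℝ} {G : ℕ}
    (hα : ∀ l ≤ G, ∀ n : ℕ, α - l + n ≠ 0) (c : ℕ → ℝ) {k u : ℕ} (hku : k ≤ u) :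
    ∑ l ∈ range (G + 1), poch (α - l) l * c l * momFun α (X ^ k * laguerre α u) (-(l + 1)) =
      Real.Gamma α * ∑ l ∈ Icc k G, poch (α - l) k * c l * (u + l - k).choose (l - k) := by
  have hsub : Icc k G ⊆ range (G + 1) := fun l hl => by
    simp only [mem_Icc, mem_range] at hl ⊢; omega
  rw [← sum_subset hsub fun l hl hlk => ?_, mul_sum]
  · refine sum_congr rfl fun l hl => ?_
    obtain ⟨hkl, hlG⟩ := mem_Icc.mp hl
    rw [mul_right_comm, poch_mul_momFun_X_pow_mul_laguerre (hα l hlG) hkl]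
    ring
  · simp only [mem_Icc, mem_range, not_and_or, not_le] at hl hlk
    rw [momFun_X_pow_mul_laguerre_of_lt (hα l (by omega)) (by omega) hku, mul_zero]

theorem statement7_general (α : ℝ) (m : ℕ) (g : Fin m → ℕ)
    (hα : ∀ k : ℕ, α - (Gmax g : ℝ) ≠ -(k : ℝ))
    (w : Fin m → ℕ → ℝ)
    (κ : ℕ → Fin m → ℝ) :
    ∀ k u i : ℕ, k ≤ u → i < m →
      bilin α g κ w (Polynomial.X ^ k * laguerre α u) (Polynomial.X ^ i) =
        Real.Gamma α * ∑ h : Fin m, κ i h *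
          ∑ l ∈ Finset.Icc k (g h),
            poch (α - l) k * w h l * (Nat.choose (u + l - k) (l - k) : ℝ) := by
  intro k u i hku hi
  rw [bilin_X_pow α g κ w _ hi, mul_sum]
  refine sum_congr rfl fun h _ => ?_
  have hαh : ∀ l ≤ g h, ∀ n : ℕ, α - l + n ≠ 0 := fun l hl n hzero =>
    hα (Gmax g - l + n) (by
      have : g h ≤ Gmax g := le_sup (mem_univ h)
      push_cast [Nat.cast_sub (hl.trans this)]
      linarith)
  rw [sum_poch_mul_momFun_X_pow_mul_laguerre hαh _ hku, mul_left_comm]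

/-- key Lemma: for arbitrary `κ_i^g`, `0 ≤ k ≤ u` and `0 ≤ i ≤ m−1`,
`⟨x^k·L_u^α, x^i⟩ = Γ(α)·Σ_{g∈G} κ_i^g·Σ_{l=k}^{g} (α−l)_k·w_l^g·binom(u+l−k, l−k)`. -/
theorem statement7 (α : ℝ) (m : ℕ) (hm : 0 < m) (g : Fin m → ℕ) (hg : StrictMono g)
    (hgpos : ∀ i, 0 < g i) (R : Fin m → Polynomial ℝ)
    (hdeg : ∀ i, (R i).natDegree = g i)
    (hlead : ∀ i, (R i).leadingCoeff = 1 / (Nat.factorial (g i) : ℝ))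
    (hα : ∀ k : ℕ, α - (Gmax g : ℝ) ≠ -(k : ℝ))
    (w : Fin m → ℕ → ℝ)
    (hw : ∀ h : Fin m, R h = ∑ l ∈ Finset.range (g h + 1), Polynomial.C (w h l) * binomPoly l)
    (κ : ℕ → Fin m → ℝ) :
    ∀ k u i : ℕ, k ≤ u → i < m →
      bilin α g κ w (Polynomial.X ^ k * laguerre α u) (Polynomial.X ^ i) =
        Real.Gamma α * ∑ h : Fin m, κ i h *
          ∑ l ∈ Finset.Icc k (g h),
            poch (α - l) k * w h l * (Nat.choose (u + l - k) (l - k) : ℝ) :=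
  statement7_general α m g hα w κ
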